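/- (Asymptotic complexity of statistical decoding for sub-linear error weight.) Fix 0 < ω < 1/2. For 0 < τ < 1/2 − √(ω−ω²), let r(τ) = (1−2τ − √((1−2τ)²−4ω(1−ω)))/(2(1−ω)) and g(τ) = 2ω·log₂ r(τ) − 2τ·log₂(1−r(τ)) − 2(1−τ)·log₂(1+r(τ)) + 2H(ω). Then g(τ) = −2τ·log₂(1−2ω) + o(τ) as τ → 0⁺, i.e. lim_{τ→0⁺} (g(τ) + 2τ·log₂(1−2ω))/τ = 0. -/

import Mathlib

open Filter Topology

/-- The binary entropy function `H(x) = −x log₂ x − (1−x) log₂ (1−x)`. -/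
noncomputable def binH (x : ℝ) : ℝ :=
  -x * Real.logb 2 x - (1 - x) * Real.logb 2 (1 - x)

/-!
At `τ = 0` the root is `r₀ = ω / (1 - ω)`, and `g(0) = 0`. Writing
`g(τ) = φ(τ, r(τ))` with `φ(τ, r) = 2ω log₂ r − 2τ log₂(1−r) − 2(1−τ) log₂(1+r) + 2H(ω)`,
the point `r₀` is a critical point of `φ(0, ·)` (as `2ω/r₀ = 2/(1+r₀)`), so by the chain rule
`g'(0) = ∂φ/∂τ (0, r₀) = 2 log₂((1+r₀)/(1−r₀)) = −2 log₂(1−2ω)`, whatever `r'(0)` is.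
Hence `g(τ) + 2τ log₂(1−2ω)` vanishes to first order at `0`.
-/

namespace StatisticalDecoding

open Real

noncomputable def root (ω τ : ℝ) : ℝ :=
  (1 - 2 * τ - √((1 - 2 * τ) ^ 2 - 4 * ω * (1 - ω))) / (2 * (1 - ω))

noncomputable def exponent (ω τ r : ℝ) : ℝ :=
  2 * ω * logb 2 r - 2 * τ * logb 2 (1 - r) - 2 * (1 - τ) * logb 2 (1 + r) + 2 * binH ω

theorem _root_.HasDerivAt.logb {f : ℝ → ℝ} {f' x b : ℝ} (hf : HasDerivAt f f' x)
    (hx : f x ≠ 0) : HasDerivAt (fun y => logb b (f y)) (f' / f x / log b) x :=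
  (hf.log hx).div_const (log b)

theorem _root_.tendsto_div_self_of_hasDerivAt_zero {f : ℝ → ℝ} {f' : ℝ}
    (hf : HasDerivAt f f' 0) (hf0 : f 0 = 0) :
    Tendsto (fun τ => f τ / τ) (𝓝[≠] 0) (𝓝 f') := by
  simpa [hf0, div_eq_inv_mul] using hf.tendsto_slope_zero

variable {ω : ℝ}

theorem root_zero (hω : ω < 1 / 2) : root ω 0 = ω / (1 - ω) := by
  have h : (1 - 2 * (0 : ℝ)) ^ 2 - 4 * ω * (1 - ω) = (1 - 2 * ω) ^ 2 := by ring
  have hω1 : 1 - ω ≠ 0 := by linarith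
  rw [root, h, sqrt_sq (by linarith)]
  field_simp
  ring

theorem differentiableAt_root (hω : ω < 1 / 2) :
    DifferentiableAt ℝ (root ω) 0 := by
  have hdisc : (1 - 2 * (0 : ℝ)) ^ 2 - 4 * ω * (1 - ω) ≠ 0 := by nlinarith
  unfold root
  fun_prop (disch := exact hdisc)

theorem exponent_root_zero (hω0 : 0 < ω) (hω1 : ω < 1) :
    exponent ω 0 (ω / (1 - ω)) = 0 := by
  have h1 : 1 - ω ≠ 0 := by linarith
  have hplus : 1 + ω / (1 - ω) = (1 - ω)⁻¹ := by field_simp; ring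
  rw [exponent, binH, hplus, logb_inv, logb_div hω0.ne' h1]
  ring

theorem hasDerivAt_exponent_comp {r : ℝ → ℝ} {r' : ℝ} (hω0 : 0 < ω) (hω : ω < 1 / 2)
    (hr : HasDerivAt r r' 0) (hr0 : r 0 = ω / (1 - ω)) :
    HasDerivAt (fun τ => exponent ω τ (r τ)) (-2 * logb 2 (1 - 2 * ω)) 0 := by
  have h1 : 0 < 1 - ω := by linarith
  have h2 : 0 < 1 - 2 * ω := by linarith
  have hminus : 1 - r 0 = (1 - 2 * ω) / (1 - ω) := by rw [hr0]; field_simp; ring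
  have hplus : 1 + r 0 = (1 - ω)⁻¹ := by rw [hr0]; field_simp; ring
  have hlog := hr.logb (b := 2) (by rw [hr0]; positivity)
  have hlogm := (hr.const_sub 1).logb (b := 2) (by rw [hminus]; positivity)
  have hlogp := (hr.const_add 1).logb (b := 2) (by rw [hplus]; positivity)
  have hτ : HasDerivAt (fun τ : ℝ => 2 * τ) 2 0 := by
    simpa using (hasDerivAt_id (0 : ℝ)).const_mul 2
  have hτ' : HasDerivAt (fun τ : ℝ => 2 * (1 - τ)) (-2) 0 := by
    simpa using ((hasDerivAt_id (0 : ℝ)).const_sub 1).const_mul 2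
  refine ((((hlog.const_mul (2 * ω)).sub (hτ.mul hlogm)).sub (hτ'.mul hlogp)).add_const
    (2 * binH ω)).congr_deriv ?_
  have hlog2 : log 2 ≠ 0 := by positivity
  rw [hminus, hplus, hr0, logb_div h2.ne' h1.ne', logb_inv]
  field_simp
  ring

end StatisticalDecoding

open StatisticalDecoding in
/-- asymptotic complexity of statistical decoding for a sub-linear
error weight: `g(τ) = −2τ log₂(1−2ω) + o(τ)` as `τ → 0⁺`. -/
theorem sublinear_exponent (ω : ℝ) (hω0 : 0 < ω) (hω : ω < 1 / 2) :
    Filter.Tendsto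
      (fun τ : ℝ =>
        (let r : ℝ := (1 - 2 * τ - Real.sqrt ((1 - 2 * τ) ^ 2 - 4 * ω * (1 - ω))) /
          (2 * (1 - ω));
        (2 * ω * Real.logb 2 r - 2 * τ * Real.logb 2 (1 - r)
          - 2 * (1 - τ) * Real.logb 2 (1 + r) + 2 * binH ω)
          + 2 * τ * Real.logb 2 (1 - 2 * ω)) / τ)
      (nhdsWithin 0 (Set.Ioi 0)) (nhds 0) := by
  have hg := hasDerivAt_exponent_comp hω0 hω (differentiableAt_root hω).hasDerivAt
    (root_zero hω)
  have hlin : HasDerivAt (fun τ : ℝ => 2 * τ * Real.logb 2 (1 - 2 * ω))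
      (2 * Real.logb 2 (1 - 2 * ω)) 0 := by
    simpa using ((hasDerivAt_id (0 : ℝ)).const_mul 2).mul_const (Real.logb 2 (1 - 2 * ω))
  have hsum := hg.add hlin
  rw [neg_mul, neg_add_cancel] at hsum
  have hsum0 : exponent ω 0 (root ω 0) + 2 * 0 * Real.logb 2 (1 - 2 * ω) = 0 := by
    rw [root_zero hω, exponent_root_zero hω0 (by linarith)]
    ring
  exact (tendsto_div_self_of_hasDerivAt_zero hsum hsum0).mono_left (nhdsGT_le_nhdsNE 0)
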